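/- arXiv:2208.06144 — 2 statements merged into one kernel-verified Lean document; each statement's English description precedes it below -/
import Mathlib

section
/- (Theorem 2: adding intermediate nodes does not affect the relevance computed by GNN.) Let V and E be finite types with maps s, t : E → V, and assume every vertex has positive out-degree O(u) = |{e : s(e) = u}|. Let P be the V×V real matrix with P(u,v) = |{e : s(e)=u and t(e)=v}| / O(u), let B be the V×E matrix with B(u,e) = 1/O(u) if s(e) = u and 0 otherwise, let C be the E×V matrix with C(e,v) = 1 if t(e) = v and 0 otherwise, and let P' = fromBlocks 0 B C 0 be the transition matrix of the graph obtained by subdividing every edge e into two steps s(e) → e → t(e). Then for every k ≥ 0 and all original vertices u, v ∈ V, the ((inl u),(inl v)) entry of (P')^{2k} equals the (u,v) entry of P^k, and the ((inl u),(inr e)) entry of (P')^{2k} is 0 for every e ∈ E; that is, the 2k-step visit probabilities in the subdivided graph between original vertices coincide with the k-step visit probabilities in the original graph. -/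
/-- **Theorem 2: adding intermediate nodes does not affect the relevance
computed by GNN.** Let `V`, `E` be finite types with `s t : E → V` and every vertex of
positive out-degree `O u = |{e : s e = u}|`. With `P u v = |{e : s e = u ∧ t e = v}| / O u`,
`B u e = 1 / O u` if `s e = u` (else `0`), `C e v = 1` if `t e = v` (else `0`), and
`P' = fromBlocks 0 B C 0` the transition matrix of the subdivided graph, for every `k` and
all original vertices `u v : V` the `(inl u, inl v)` entry of `P' ^ (2k)` equals the
`(u, v)` entry of `P ^ k`, and the `(inl u, inr e)` entry of `P' ^ (2k)` is `0`. -/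
theorem subdivision_preserves_visit_probabilities
    {V E : Type*} [Fintype V] [Fintype E] [DecidableEq V] [DecidableEq E]
    (s t : E → V)
    (hO : ∀ u : V, 0 < (Finset.univ.filter fun e => s e = u).card)
    (P : Matrix V V ℝ) (B : Matrix V E ℝ) (C : Matrix E V ℝ)
    (hP : ∀ u v : V, P u v =
      ((Finset.univ.filter fun e => s e = u ∧ t e = v).card : ℝ) /
        ((Finset.univ.filter fun e => s e = u).card : ℝ))
    (hB : ∀ (u : V) (e : E), B u e =
      if s e = u then 1 / ((Finset.univ.filter fun e' => s e' = u).card : ℝ) else 0)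
    (hC : ∀ (e : E) (v : V), C e v = if t e = v then 1 else 0)
    (P' : Matrix (V ⊕ E) (V ⊕ E) ℝ) (hP' : P' = Matrix.fromBlocks 0 B C 0)
    (k : ℕ) (u v : V) :
    (P' ^ (2 * k)) (Sum.inl u) (Sum.inl v) = (P ^ k) u v ∧
      ∀ e : E, (P' ^ (2 * k)) (Sum.inl u) (Sum.inr e) = 0 := by
  have hBC : B * C = P := by
    ext u v
    rw [Matrix.mul_apply, hP]
    have : ∀ e : E, B u e * C e v =
        if s e = u ∧ t e = v then 1 / ((Finset.univ.filter fun e' => s e' = u).card : ℝ) else 0 := by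
      intro e
      rw [hB, hC]
      by_cases h1 : s e = u <;> by_cases h2 : t e = v <;> simp [h1, h2]
    simp only [this, Finset.sum_ite, Finset.sum_const_zero, Finset.sum_const, add_zero,
      nsmul_eq_mul]
    rw [mul_one_div]
  have key : ∀ k : ℕ, P' ^ (2 * k) =
      Matrix.fromBlocks (P ^ k) 0 0 ((C * B) ^ k) := by
    intro k
    induction k with
    | zero => simp [Matrix.fromBlocks_one]
    | succ n ih =>
      have : 2 * (n + 1) = 2 * n + 1 + 1 := by ring
      rw [this, pow_succ, pow_succ, ih, hP', Matrix.fromBlocks_multiply,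
        Matrix.fromBlocks_multiply]
      simp [pow_succ, hBC, Matrix.mul_assoc]
  rw [key k]
  exact ⟨rfl, fun e => rfl⟩
end

section
/- (Corollary 1: meeting probabilities are preserved under edge subdivision.) Let V and E be finite types with maps s, t : E → V, and assume every vertex has positive out-degree O(u) = |{e : s(e) = u}|. Let P be the V×V real matrix with P(u,v) = |{e : s(e)=u and t(e)=v}| / O(u), and let P' = fromBlocks 0 B C 0 be the (V⊕E)×(V⊕E) transition matrix of the subdivided graph, where B(u,e) = 1/O(u) if s(e) = u and 0 otherwise, and C(e,v) = 1 if t(e) = v and 0 otherwise. Then for every k ≥ 0 and all original vertices i, j ∈ V, the inner product of the rows of (P')^{2k} indexed by inl i and inl j, taken over all indices l ∈ V ⊕ E, equals ∑_{l ∈ V} (P^k)(i,l)·(P^k)(j,l); that is, the pairwise meeting probability of two 2k-step random walks in the subdivided graph started at original vertices i and j equals the pairwise meeting probability of two k-step random walks in the original graph. -/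
lemma blockdiag_pow {V E : Type*} [Fintype V] [Fintype E] [DecidableEq V] [DecidableEq E]
    (A : Matrix V V ℝ) (D : Matrix E E ℝ) (k : ℕ) :
    (Matrix.fromBlocks A 0 0 D) ^ k = Matrix.fromBlocks (A ^ k) 0 0 (D ^ k) := by
  induction k with
  | zero => simp [Matrix.fromBlocks_one]
  | succ n ih =>
    rw [pow_succ, pow_succ, pow_succ, ih, Matrix.fromBlocks_multiply]
    simp

/-- **Corollary 1: meeting probabilities are preserved under edge
subdivision.** With the setup of edge subdivision (`P` the transition matrix on `V`,
`P' = fromBlocks 0 B C 0` the transition matrix on `V ⊕ E`), for every `k` and all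
original vertices `i j : V`, the inner product of the rows of `P' ^ (2k)` indexed by
`inl i` and `inl j` (summed over all `l : V ⊕ E`) equals
`∑ l : V, (P ^ k) i l * (P ^ k) j l`. -/
theorem subdivision_preserves_meeting_probability
    {V E : Type*} [Fintype V] [Fintype E] [DecidableEq V] [DecidableEq E]
    (s t : E → V)
    (hO : ∀ u : V, 0 < (Finset.univ.filter fun e => s e = u).card)
    (P : Matrix V V ℝ) (B : Matrix V E ℝ) (C : Matrix E V ℝ)
    (hP : ∀ u v : V, P u v =
      ((Finset.univ.filter fun e => s e = u ∧ t e = v).card : ℝ) /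
        ((Finset.univ.filter fun e => s e = u).card : ℝ))
    (hB : ∀ (u : V) (e : E), B u e =
      if s e = u then 1 / ((Finset.univ.filter fun e' => s e' = u).card : ℝ) else 0)
    (hC : ∀ (e : E) (v : V), C e v = if t e = v then 1 else 0)
    (P' : Matrix (V ⊕ E) (V ⊕ E) ℝ) (hP' : P' = Matrix.fromBlocks 0 B C 0)
    (k : ℕ) (i j : V) :
    ∑ l : V ⊕ E, (P' ^ (2 * k)) (Sum.inl i) l * (P' ^ (2 * k)) (Sum.inl j) l =
      ∑ l : V, (P ^ k) i l * (P ^ k) j l := by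
  have hBC : B * C = P := by
    ext u v
    rw [hP]
    have : ∀ e : E, B u e * C e v =
        if s e = u ∧ t e = v then 1 / ((Finset.univ.filter fun e' => s e' = u).card : ℝ) else 0 := by
      intro e
      rw [hB, hC]
      by_cases h1 : s e = u <;> by_cases h2 : t e = v <;> simp [h1, h2]
    simp only [Matrix.mul_apply, this]
    rw [Finset.sum_ite, Finset.sum_const, Finset.sum_const_zero, add_zero,
      nsmul_eq_mul, mul_one_div]
  have h2 : P' ^ (2 * k) = Matrix.fromBlocks (P ^ k) 0 0 ((C * B) ^ k) := by
    rw [pow_mul, hP']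
    have : (Matrix.fromBlocks 0 B C 0 : Matrix (V ⊕ E) (V ⊕ E) ℝ) ^ 2 =
        Matrix.fromBlocks (B * C) 0 0 (C * B) := by
      rw [sq, Matrix.fromBlocks_multiply]; simp
    rw [this, hBC, blockdiag_pow]
  rw [h2, Fintype.sum_sum_type]
  simp [Matrix.fromBlocks]
end
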